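/- Let E be a directed graph, K a field, and v a vertex such that T_E(v) is a cycle without exits (i.e., T_E(v) consists exactly of the vertices of a single cycle c based at v and c has no exits). Then the corner vL_K(E)v is isomorphic as a K-algebra to the Laurent polynomial ring K[x, x⁻¹]. -/

import Mathlib

/-- A directed graph: vertices, edges, source and target (range) maps. -/
structure DGraph where
  V : Type
  E : Type
  src : E → V
  tgt : E → V

namespace DGraph

/-- There is a (possibly empty) directed path from `u` to `w`. -/
def Reaches (G : DGraph) (u w : G.V) : Prop :=
  Relation.ReflTransGen (fun a b => ∃ e : G.E, G.src e = a ∧ G.tgt e = b) u w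

/-- A nonempty list of composable edges, closed, not passing through any vertex twice. -/
def IsCycle (G : DGraph) (p : List G.E) : Prop :=
  p ≠ [] ∧ List.Chain' (fun e f => G.tgt e = G.src f) p ∧
    p.getLast?.map G.tgt = p.head?.map G.src ∧ (p.map G.src).Nodup

/-- The preorder on cycles: `c ≥ c'` iff some vertex of `c` reaches some vertex of `c'`. -/
def CycleGe (G : DGraph) (c c' : List G.E) : Prop :=
  ∃ u w : G.V, u ∈ c.map G.src ∧ w ∈ c'.map G.src ∧ G.Reaches u w

/-- Two cycles are the same cycle iff one is a rotation of the other. -/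
def IsRotation (G : DGraph) (c c' : List G.E) : Prop :=
  ∃ n : ℕ, c' = c.rotate n

/-- An infinite path, as a coherent sequence of edges. -/
def IsInfPath (G : DGraph) (p : ℕ → G.E) : Prop :=
  ∀ n : ℕ, G.tgt (p n) = G.src (p (n + 1))

/-- A rational infinite path: `g g g ⋯` for a (finite, nonempty, closed) path `g`. -/
def IsRational (G : DGraph) (q : ℕ → G.E) : Prop :=
  ∃ (g : List G.E) (hg : g ≠ []),
    List.Chain' (fun e f => G.tgt e = G.src f) g ∧
    g.getLast?.map G.tgt = g.head?.map G.src ∧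
    ∀ k : ℕ, q k = g.get ⟨k % g.length, Nat.mod_lt _ (List.length_pos_iff.mpr hg)⟩

/-- Tail equivalence of infinite paths. -/
def TailEquiv (G : DGraph) (p q : ℕ → G.E) : Prop :=
  ∃ m n : ℕ, ∀ k : ℕ, p (m + k) = q (n + k)

end DGraph

/-- Generators of the Leavitt path algebra: vertices, edges (real), ghost edges. -/
inductive LPAGen (G : DGraph) : Type
  | vertex : G.V → LPAGen G
  | edge : G.E → LPAGen G
  | ghost : G.E → LPAGen G

open Classical in
/-- The defining relations of the Leavitt path algebra `L_K(E)`: the vertices are pairwise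
orthogonal idempotents, `s(e)e = e = e r(e)`, `r(e)e* = e* = e* s(e)`, the (CK-1)
relations `e* f = δ_{e,f} r(e)`, and the (CK-2) relations `v = ∑_{s(e)=v} e e*` for every
regular vertex `v`. -/
inductive LPARel (K : Type) [Field K] (G : DGraph) :
    FreeAlgebra K (LPAGen G) → FreeAlgebra K (LPAGen G) → Prop
  | vtx (u v : G.V) :
      LPARel K G (FreeAlgebra.ι K (LPAGen.vertex u) * FreeAlgebra.ι K (LPAGen.vertex v))
        (if u = v then FreeAlgebra.ι K (LPAGen.vertex u) else 0)
  | src_edge (e : G.E) :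
      LPARel K G (FreeAlgebra.ι K (LPAGen.vertex (G.src e)) * FreeAlgebra.ι K (LPAGen.edge e))
        (FreeAlgebra.ι K (LPAGen.edge e))
  | edge_tgt (e : G.E) :
      LPARel K G (FreeAlgebra.ι K (LPAGen.edge e) * FreeAlgebra.ι K (LPAGen.vertex (G.tgt e)))
        (FreeAlgebra.ι K (LPAGen.edge e))
  | tgt_ghost (e : G.E) :
      LPARel K G (FreeAlgebra.ι K (LPAGen.vertex (G.tgt e)) * FreeAlgebra.ι K (LPAGen.ghost e))
        (FreeAlgebra.ι K (LPAGen.ghost e))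
  | ghost_src (e : G.E) :
      LPARel K G (FreeAlgebra.ι K (LPAGen.ghost e) * FreeAlgebra.ι K (LPAGen.vertex (G.src e)))
        (FreeAlgebra.ι K (LPAGen.ghost e))
  | ck1 (e f : G.E) :
      LPARel K G (FreeAlgebra.ι K (LPAGen.ghost e) * FreeAlgebra.ι K (LPAGen.edge f))
        (if e = f then FreeAlgebra.ι K (LPAGen.vertex (G.tgt e)) else 0)
  | ck2 (v : G.V) (hfin : {e : G.E | G.src e = v}.Finite)
      (hne : {e : G.E | G.src e = v}.Nonempty) :
      LPARel K G (FreeAlgebra.ι K (LPAGen.vertex v))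
        (∑ e ∈ hfin.toFinset,
          FreeAlgebra.ι K (LPAGen.edge e) * FreeAlgebra.ι K (LPAGen.ghost e))

/-- The Leavitt path algebra of the graph `G` over the field `K`. -/
abbrev LPA (K : Type) [Field K] (G : DGraph) := RingQuot (LPARel K G)

/-- The image of a vertex `v` in the Leavitt path algebra. -/
noncomputable def lpaVtx (K : Type) [Field K] (G : DGraph) (v : G.V) : LPA K G :=
  RingQuot.mkRingHom (LPARel K G) (FreeAlgebra.ι K (LPAGen.vertex v))

lemma lpaVtx_idem (K : Type) [Field K] (G : DGraph) (v : G.V) :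
    lpaVtx K G v * lpaVtx K G v = lpaVtx K G v := by
  have h := RingQuot.mkRingHom_rel (LPARel.vtx (K := K) (G := G) v v)
  rw [if_pos rfl, map_mul] at h
  exact h

/-- The corner `vLv` of the Leavitt path algebra, as a non-unital `K`-subalgebra. -/
noncomputable def lpaCorner (K : Type) [Field K] (G : DGraph) (v : G.V) :
    NonUnitalSubalgebra K (LPA K G) where
  carrier := {x : LPA K G | lpaVtx K G v * x * lpaVtx K G v = x}
  zero_mem' := by simp
  add_mem' := by
    intro a b ha hb
    simp only [Set.mem_setOf_eq] at *
    rw [mul_add, add_mul, ha, hb]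
  mul_mem' := by
    intro a b ha hb
    simp only [Set.mem_setOf_eq] at *
    have hv := lpaVtx_idem K G v
    have ha1 : lpaVtx K G v * a = a := by
      conv_lhs => rw [← ha]
      rw [← mul_assoc, ← mul_assoc, hv, ha]
    have hb1 : b * lpaVtx K G v = b := by
      conv_lhs => rw [← hb]
      rw [mul_assoc, hv, hb]
    rw [← mul_assoc, ha1, mul_assoc, hb1]
  smul_mem' := by
    intro r x hx
    simp only [Set.mem_setOf_eq] at *
    rw [mul_smul_comm, smul_mul_assoc, hx]

/-!
The vertex `v` is an identity for the corner `vLv`, and since no edge leaves the cycle `c` other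
than along it, (CK2) at the vertices of `c` gives `c c* = v`; together with `c* c = v` from (CK1),
`c` is a unit of `vLv`. So `x ↦ c` defines a homomorphism `K[x, x⁻¹] → vLv`.

It is onto: `L_K(E)` is spanned by `1` and the monomials `α β*`, and if `v α β* v ≠ 0`, then `α`
and `β` are walks from `v` which, having no way off the cycle, run around it, so `α β*` is a
power of `c` or of `c*`. It is one-to-one: on the Chen module of infinite paths, graded by `ℤ`,
`cᵐ` sends the basis vector `(c c c ⋯, 0)` to `(c c c ⋯, m |c|)`, so the powers of `c` are
linearly independent.
-/

namespace DGraph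

variable {G : DGraph}

def NoExits (G : DGraph) (c : List G.E) : Prop :=
  ∀ e f : G.E, G.src e = G.src f → G.src e ∈ c.map G.src → e = f

namespace IsCycle

variable {c : List G.E}

theorem length_pos (hc : G.IsCycle c) : 0 < c.length := List.length_pos_iff.mpr hc.1

variable (hc : G.IsCycle c)

def edge (i : ℕ) : G.E := c.get ⟨i % c.length, Nat.mod_lt _ hc.length_pos⟩

def vertex (i : ℕ) : G.V := G.src (hc.edge i)

theorem edge_add_length (i : ℕ) : hc.edge (i + c.length) = hc.edge i := by
  simp only [edge, Nat.add_mod_right]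

theorem vertex_add_length (i : ℕ) : hc.vertex (i + c.length) = hc.vertex i := by
  rw [vertex, vertex, edge_add_length]

theorem vertex_length : hc.vertex c.length = hc.vertex 0 := by
  simpa using hc.vertex_add_length 0

theorem tgt_edge (i : ℕ) : G.tgt (hc.edge i) = hc.vertex (i + 1) := by
  have hn := hc.length_pos
  have hsucc : (i + 1) % c.length = (i % c.length + 1) % c.length := by
    rw [Nat.add_mod i 1, Nat.add_mod (i % c.length) 1, Nat.mod_mod]
  simp only [vertex, edge, List.get_eq_getElem]
  by_cases hlast : i % c.length + 1 < c.length
  · simp only [hsucc, Nat.mod_eq_of_lt hlast]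
    exact List.isChain_iff_getElem.mp hc.2.1 _ hlast
  · have hi : i % c.length = c.length - 1 := by
      have := Nat.mod_lt i hn
      omega
    have hclose := hc.2.2.1
    have hne := hc.1
    rw [List.getLast?_eq_some_getLast hne, List.head?_eq_some_head hne, Option.map_some,
      Option.map_some, Option.some_inj, List.getLast_eq_getElem, List.head_eq_getElem] at hclose
    simp only [hsucc, hi, Nat.sub_add_cancel hn, Nat.mod_self]
    exact hclose

theorem vertex_zero {v : G.V} (hbase : c.head?.map G.src = some v) : hc.vertex 0 = v := by
  have hne := hc.1
  rw [List.head?_eq_some_head hne, Option.map_some, Option.some_inj, List.head_eq_getElem] at hbase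
  simpa [vertex, edge, List.get_eq_getElem] using hbase

theorem vertex_mem (i : ℕ) : hc.vertex i ∈ c.map G.src :=
  List.mem_map_of_mem (List.getElem_mem _)

theorem mod_eq_of_vertex_eq {i j : ℕ} (h : hc.vertex i = hc.vertex j) :
    i % c.length = j % c.length := by
  have hn := hc.length_pos
  exact (List.Nodup.getElem_inj_iff hc.2.2.2 (i := i % c.length) (j := j % c.length)
    (hi := by simpa using Nat.mod_lt i hn) (hj := by simpa using Nat.mod_lt j hn)).mp
    (by simpa [vertex, edge, List.get_eq_getElem] using h)

theorem eq_edge_of_src_eq (hnoexit : G.NoExits c) {e : G.E} {i : ℕ}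
    (h : G.src e = hc.vertex i) : e = hc.edge i :=
  hnoexit e (hc.edge i) h (h ▸ hc.vertex_mem i)

end IsCycle

end DGraph

section Generators

open scoped Classical

variable (K : Type) [Field K] (G : DGraph)

noncomputable def lpaEdge (e : G.E) : LPA K G :=
  RingQuot.mkRingHom (LPARel K G) (FreeAlgebra.ι K (LPAGen.edge e))

noncomputable def lpaGhost (e : G.E) : LPA K G :=
  RingQuot.mkRingHom (LPARel K G) (FreeAlgebra.ι K (LPAGen.ghost e))

variable {K G}

theorem lpaVtx_mul_lpaVtx (u w : G.V) :
    lpaVtx K G u * lpaVtx K G w = if u = w then lpaVtx K G u else 0 := by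
  have h := RingQuot.mkRingHom_rel (LPARel.vtx (K := K) (G := G) u w)
  rw [map_mul, apply_ite (RingQuot.mkRingHom (LPARel K G)), map_zero] at h
  exact h

theorem lpaVtx_src_mul_lpaEdge (e : G.E) :
    lpaVtx K G (G.src e) * lpaEdge K G e = lpaEdge K G e := by
  have h := RingQuot.mkRingHom_rel (LPARel.src_edge (K := K) (G := G) e)
  rwa [map_mul] at h

theorem lpaEdge_mul_lpaVtx_tgt (e : G.E) :
    lpaEdge K G e * lpaVtx K G (G.tgt e) = lpaEdge K G e := by
  have h := RingQuot.mkRingHom_rel (LPARel.edge_tgt (K := K) (G := G) e)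
  rwa [map_mul] at h

theorem lpaVtx_tgt_mul_lpaGhost (e : G.E) :
    lpaVtx K G (G.tgt e) * lpaGhost K G e = lpaGhost K G e := by
  have h := RingQuot.mkRingHom_rel (LPARel.tgt_ghost (K := K) (G := G) e)
  rwa [map_mul] at h

theorem lpaGhost_mul_lpaVtx_src (e : G.E) :
    lpaGhost K G e * lpaVtx K G (G.src e) = lpaGhost K G e := by
  have h := RingQuot.mkRingHom_rel (LPARel.ghost_src (K := K) (G := G) e)
  rwa [map_mul] at h

theorem lpaGhost_mul_lpaEdge (e f : G.E) :
    lpaGhost K G e * lpaEdge K G f = if e = f then lpaVtx K G (G.tgt e) else 0 := by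
  have h := RingQuot.mkRingHom_rel (LPARel.ck1 (K := K) (G := G) e f)
  rw [map_mul, apply_ite (RingQuot.mkRingHom (LPARel K G)), map_zero] at h
  exact h

theorem lpaVtx_mul_lpaEdge (u : G.V) (e : G.E) :
    lpaVtx K G u * lpaEdge K G e = if u = G.src e then lpaEdge K G e else 0 := by
  rw [← lpaVtx_src_mul_lpaEdge, ← mul_assoc, lpaVtx_mul_lpaVtx]
  split_ifs with h <;> simp [h]

theorem lpaGhost_mul_lpaVtx (e : G.E) (u : G.V) :
    lpaGhost K G e * lpaVtx K G u = if G.src e = u then lpaGhost K G e else 0 := by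
  rw [← lpaGhost_mul_lpaVtx_src, mul_assoc, lpaVtx_mul_lpaVtx]
  split_ifs with h <;> simp [h]

theorem lpaVtx_eq_lpaEdge_mul_lpaGhost {w : G.V} {e : G.E}
    (h : ∀ f : G.E, G.src f = w ↔ f = e) :
    lpaVtx K G w = lpaEdge K G e * lpaGhost K G e := by
  have hset : {f : G.E | G.src f = w} = {e} := Set.ext h
  have hfin : {f : G.E | G.src f = w}.Finite := hset ▸ Set.finite_singleton e
  have hrel := RingQuot.mkRingHom_rel
    (LPARel.ck2 (K := K) (G := G) w hfin ⟨e, (h e).mpr rfl⟩)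
  rwa [show hfin.toFinset = {e} by simp [hset], Finset.sum_singleton, map_mul] at hrel

end Generators

namespace DGraph

inductive Walk (G : DGraph) : G.V → G.V → Type
  | nil (w : G.V) : Walk G w w
  | cons (e : G.E) {w : G.V} (α : Walk G (G.tgt e) w) : Walk G (G.src e) w

namespace Walk

variable {G : DGraph}

def length {u w : G.V} : Walk G u w → ℕ
  | nil _ => 0
  | cons _ α => α.length + 1

def append {u w x : G.V} : Walk G u w → Walk G w x → Walk G u x
  | nil _, β => β
  | cons e α, β => cons e (α.append β)

end Walk

end DGraph

section Monomials

open scoped Classical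
open DGraph

variable {K : Type} [Field K] {G : DGraph}

variable (K) in
noncomputable def lpaPath {u w : G.V} : Walk G u w → LPA K G
  | .nil w => lpaVtx K G w
  | .cons e α => lpaEdge K G e * lpaPath α

variable (K) in
/-- `(lpaPath K α)*` -/
noncomputable def lpaGhostPath {u w : G.V} : Walk G u w → LPA K G
  | .nil w => lpaVtx K G w
  | .cons e α => lpaGhostPath α * lpaGhost K G e

theorem lpaVtx_mul_lpaPath (x : G.V) {u w : G.V} (α : Walk G u w) :
    lpaVtx K G x * lpaPath K α = if x = u then lpaPath K α else 0 := by
  cases α with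
  | nil => rw [lpaPath, lpaVtx_mul_lpaVtx]; split_ifs with h <;> simp [h]
  | cons e α => rw [lpaPath, ← mul_assoc, lpaVtx_mul_lpaEdge]; split_ifs <;> simp

theorem lpaGhostPath_mul_lpaVtx {u w : G.V} (α : Walk G u w) (x : G.V) :
    lpaGhostPath K α * lpaVtx K G x = if u = x then lpaGhostPath K α else 0 := by
  cases α with
  | nil => rw [lpaGhostPath, lpaVtx_mul_lpaVtx]
  | cons e α => rw [lpaGhostPath, mul_assoc, lpaGhost_mul_lpaVtx]; split_ifs <;> simp

theorem lpaPath_append {u w x : G.V} (α : Walk G u w) (β : Walk G w x) :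
    lpaPath K (α.append β) = lpaPath K α * lpaPath K β := by
  induction α with
  | nil w => rw [Walk.append, lpaPath, lpaVtx_mul_lpaPath, if_pos rfl]
  | cons e α ih => rw [Walk.append, lpaPath, lpaPath, ih, mul_assoc]

theorem lpaGhostPath_append {u w x : G.V} (α : Walk G u w) (β : Walk G w x) :
    lpaGhostPath K (α.append β) = lpaGhostPath K β * lpaGhostPath K α := by
  induction α with
  | nil w => rw [Walk.append, lpaGhostPath, lpaGhostPath_mul_lpaVtx, if_pos rfl]
  | cons e α ih => rw [Walk.append, lpaGhostPath, lpaGhostPath, ih, mul_assoc]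

/-- `β* α` cancels the common prefix of `α` and `β`, leaving `0`, a path or a ghost path. -/
theorem lpaGhostPath_mul_lpaPath {x x' w w' : G.V} (β : Walk G x w') (α : Walk G x' w) :
    lpaGhostPath K β * lpaPath K α = 0 ∨
      (∃ γ : Walk G w' w, lpaGhostPath K β * lpaPath K α = lpaPath K γ) ∨
      ∃ γ : Walk G w w', lpaGhostPath K β * lpaPath K α = lpaGhostPath K γ := by
  induction β generalizing x' with
  | nil x =>
    rw [lpaGhostPath, lpaVtx_mul_lpaPath]
    split_ifs with h
    · subst h; exact Or.inr (Or.inl ⟨α, rfl⟩)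
    · exact Or.inl rfl
  | cons e β ih =>
    cases α with
    | nil x' =>
      rw [lpaPath, lpaGhostPath_mul_lpaVtx]
      split_ifs with h
      · subst h; exact Or.inr (Or.inr ⟨.cons e β, rfl⟩)
      · exact Or.inl rfl
    | cons f α =>
      rw [lpaGhostPath, lpaPath, mul_assoc, ← mul_assoc (lpaGhost K G e), lpaGhost_mul_lpaEdge]
      split_ifs with h
      · subst h
        rw [lpaVtx_mul_lpaPath, if_pos rfl]
        exact ih α
      · simp

variable (K G) in
def lpaMonomials : Set (LPA K G) :=
  {x | ∃ (u u' w : G.V) (α : Walk G u w) (β : Walk G u' w),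
    x = lpaPath K α * lpaGhostPath K β}

theorem mul_mem_lpaMonomials {x y : LPA K G} (hx : x ∈ lpaMonomials K G)
    (hy : y ∈ lpaMonomials K G) : x * y = 0 ∨ x * y ∈ lpaMonomials K G := by
  obtain ⟨u₁, u₁', w₁, α₁, β₁, rfl⟩ := hx
  obtain ⟨u₂, u₂', w₂, α₂, β₂, rfl⟩ := hy
  have hassoc : lpaPath K α₁ * lpaGhostPath K β₁ * (lpaPath K α₂ * lpaGhostPath K β₂) =
      lpaPath K α₁ * (lpaGhostPath K β₁ * lpaPath K α₂) * lpaGhostPath K β₂ := by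
    simp only [mul_assoc]
  rw [hassoc]
  rcases lpaGhostPath_mul_lpaPath (K := K) β₁ α₂ with h | ⟨γ, h⟩ | ⟨γ, h⟩
  · simp [h]
  · exact Or.inr ⟨_, _, _, α₁.append γ, β₂, by rw [h, lpaPath_append]⟩
  · exact Or.inr ⟨_, _, _, α₁, β₂.append γ, by rw [h, lpaGhostPath_append, mul_assoc]⟩

end Monomials

section Spanning

variable {K : Type} [Field K] {G : DGraph}

theorem lpaGen_mem_lpaMonomials (g : LPAGen G) :
    RingQuot.mkAlgHom K (LPARel K G) (FreeAlgebra.ι K g) ∈ lpaMonomials K G := by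
  rw [← RingHom.coe_coe, RingQuot.mkAlgHom_coe]
  cases g with
  | vertex w =>
    refine ⟨w, w, w, .nil w, .nil w, ?_⟩
    rw [lpaPath, lpaGhostPath, lpaVtx_mul_lpaVtx, if_pos rfl]; rfl
  | edge e =>
    refine ⟨_, _, _, .cons e (.nil (G.tgt e)), .nil (G.tgt e), ?_⟩
    rw [lpaPath, lpaPath, lpaGhostPath, lpaEdge_mul_lpaVtx_tgt, lpaEdge_mul_lpaVtx_tgt]; rfl
  | ghost e =>
    refine ⟨_, _, _, .nil (G.tgt e), .cons e (.nil (G.tgt e)), ?_⟩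
    rw [lpaPath, lpaGhostPath, lpaGhostPath, lpaVtx_tgt_mul_lpaGhost, lpaVtx_tgt_mul_lpaGhost]; rfl

theorem span_lpaMonomials_eq_top :
    Submodule.span K (insert 1 (lpaMonomials K G)) = ⊤ := by
  let N : Submonoid (LPA K G) :=
    { carrier := insert 0 (insert 1 (lpaMonomials K G))
      one_mem' := Set.mem_insert_of_mem _ (Set.mem_insert _ _)
      mul_mem' := by
        rintro x y (rfl | rfl | hx) (rfl | rfl | hy)
        case inr.inr.inr.inr => exact (mul_mem_lpaMonomials hx hy).imp id Or.inr
        all_goals simp_all }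
  have hgen : Set.range (fun g => RingQuot.mkAlgHom K (LPARel K G) (FreeAlgebra.ι K g)) ⊆ N := by
    rintro _ ⟨g, rfl⟩
    exact Or.inr (Or.inr (lpaGen_mem_lpaMonomials g))
  have hadjoin : Algebra.adjoin K
      (Set.range fun g => RingQuot.mkAlgHom K (LPARel K G) (FreeAlgebra.ι K g)) = ⊤ := by
    rw [Set.range_comp', ← AlgHom.map_adjoin, FreeAlgebra.adjoin_range_ι, Algebra.map_top,
      AlgHom.range_eq_top]
    exact RingQuot.mkAlgHom_surjective K _
  rw [eq_top_iff, ← Algebra.top_toSubmodule, ← hadjoin, Algebra.adjoin_eq_span,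
    ← Submodule.span_insert_zero (s := insert 1 _)]
  exact Submodule.span_mono (Submonoid.closure_le.mpr hgen)

end Spanning

section CyclePaths

open DGraph

variable {K : Type} [Field K] {G : DGraph} {c : List G.E} (hc : G.IsCycle c)

variable (K) in
noncomputable def cyclePath : ℕ → ℕ → LPA K G
  | a, 0 => lpaVtx K G (hc.vertex a)
  | a, k + 1 => lpaEdge K G (hc.edge a) * cyclePath (a + 1) k

variable (K) in
/-- `(cyclePath K hc a k)*` -/
noncomputable def cycleGhostPath : ℕ → ℕ → LPA K G
  | a, 0 => lpaVtx K G (hc.vertex a)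
  | a, k + 1 => cycleGhostPath (a + 1) k * lpaGhost K G (hc.edge a)

theorem lpaVtx_mul_cyclePath (a k : ℕ) :
    lpaVtx K G (hc.vertex a) * cyclePath K hc a k = cyclePath K hc a k := by
  cases k with
  | zero => rw [cyclePath, lpaVtx_idem]
  | succ k => rw [cyclePath, ← mul_assoc, IsCycle.vertex, lpaVtx_src_mul_lpaEdge]

theorem cyclePath_mul_lpaVtx (a k : ℕ) :
    cyclePath K hc a k * lpaVtx K G (hc.vertex (a + k)) = cyclePath K hc a k := by
  induction k generalizing a with
  | zero => rw [cyclePath, Nat.add_zero, lpaVtx_idem]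
  | succ k ih => rw [cyclePath, mul_assoc, show a + (k + 1) = a + 1 + k by omega, ih]

theorem lpaVtx_mul_cycleGhostPath (a k : ℕ) :
    lpaVtx K G (hc.vertex (a + k)) * cycleGhostPath K hc a k = cycleGhostPath K hc a k := by
  induction k generalizing a with
  | zero => rw [cycleGhostPath, Nat.add_zero, lpaVtx_idem]
  | succ k ih => rw [cycleGhostPath, ← mul_assoc, show a + (k + 1) = a + 1 + k by omega, ih]

theorem cycleGhostPath_mul_lpaVtx (a k : ℕ) :
    cycleGhostPath K hc a k * lpaVtx K G (hc.vertex a) = cycleGhostPath K hc a k := by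
  cases k with
  | zero => rw [cycleGhostPath, lpaVtx_idem]
  | succ k => rw [cycleGhostPath, mul_assoc, IsCycle.vertex, lpaGhost_mul_lpaVtx_src]

theorem cyclePath_mul_cyclePath (a j k : ℕ) :
    cyclePath K hc a j * cyclePath K hc (a + j) k = cyclePath K hc a (j + k) := by
  induction j generalizing a with
  | zero => rw [Nat.add_zero, Nat.zero_add, cyclePath, lpaVtx_mul_cyclePath]
  | succ j ih =>
    rw [cyclePath, mul_assoc, Nat.add_right_comm j, cyclePath, ← Nat.add_assoc,
      Nat.add_right_comm a, ih]

theorem cycleGhostPath_mul_cycleGhostPath (a j k : ℕ) :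
    cycleGhostPath K hc (a + j) k * cycleGhostPath K hc a j = cycleGhostPath K hc a (j + k) := by
  induction j generalizing a with
  | zero => rw [Nat.add_zero, Nat.zero_add, cycleGhostPath, cycleGhostPath_mul_lpaVtx]
  | succ j ih =>
    rw [cycleGhostPath, ← mul_assoc, Nat.add_right_comm j, cycleGhostPath, ← Nat.add_assoc,
      Nat.add_right_comm a, ih]

theorem cyclePath_add_length (a k : ℕ) :
    cyclePath K hc (a + c.length) k = cyclePath K hc a k := by
  induction k generalizing a with
  | zero => rw [cyclePath, cyclePath, hc.vertex_add_length]
  | succ k ih => rw [cyclePath, cyclePath, hc.edge_add_length, Nat.add_right_comm, ih]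

theorem cycleGhostPath_add_length (a k : ℕ) :
    cycleGhostPath K hc (a + c.length) k = cycleGhostPath K hc a k := by
  induction k generalizing a with
  | zero => rw [cycleGhostPath, cycleGhostPath, hc.vertex_add_length]
  | succ k ih => rw [cycleGhostPath, cycleGhostPath, hc.edge_add_length, Nat.add_right_comm, ih]

theorem cycleGhostPath_mul_cyclePath (a k : ℕ) :
    cycleGhostPath K hc a k * cyclePath K hc a k = lpaVtx K G (hc.vertex (a + k)) := by
  induction k generalizing a with
  | zero => rw [cycleGhostPath, cyclePath, Nat.add_zero, lpaVtx_idem]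
  | succ k ih =>
    rw [cycleGhostPath, cyclePath, mul_assoc, ← mul_assoc (lpaGhost K G _), lpaGhost_mul_lpaEdge,
      if_pos rfl, hc.tgt_edge, lpaVtx_mul_cyclePath, ih, Nat.add_right_comm, Nat.add_assoc]

theorem cyclePath_mul_cycleGhostPath (hnoexit : G.NoExits c) (a k : ℕ) :
    cyclePath K hc a k * cycleGhostPath K hc a k = lpaVtx K G (hc.vertex a) := by
  induction k generalizing a with
  | zero => rw [cycleGhostPath, cyclePath, lpaVtx_idem]
  | succ k ih =>
    have hck2 : lpaVtx K G (hc.vertex a) = lpaEdge K G (hc.edge a) * lpaGhost K G (hc.edge a) :=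
      lpaVtx_eq_lpaEdge_mul_lpaGhost fun f =>
        ⟨hc.eq_edge_of_src_eq hnoexit, fun h => h ▸ rfl⟩
    rw [cycleGhostPath, cyclePath, mul_assoc, ← mul_assoc (cyclePath K hc _ k), ih,
      ← hc.tgt_edge, ← mul_assoc, lpaEdge_mul_lpaVtx_tgt, hck2]

/-- Since `c` has no exits, a walk starting on `c` can only run along `c`. -/
theorem lpaPath_eq_cyclePath (hnoexit : G.NoExits c) {u w : G.V} (α : Walk G u w) (a : ℕ)
    (hu : u = hc.vertex a) :
    lpaPath K α = cyclePath K hc a α.length ∧ lpaGhostPath K α = cycleGhostPath K hc a α.length ∧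
      w = hc.vertex (a + α.length) := by
  induction α generalizing a with
  | nil w =>
    rw [Walk.length]
    exact ⟨by rw [lpaPath, cyclePath, hu], by rw [lpaGhostPath, cycleGhostPath, hu], hu⟩
  | cons e α ih =>
    obtain rfl := hc.eq_edge_of_src_eq hnoexit hu
    obtain ⟨hpath, hghost, hw⟩ := ih (a + 1) (hc.tgt_edge a)
    rw [Walk.length]
    refine ⟨by rw [lpaPath, cyclePath, hpath], by rw [lpaGhostPath, cycleGhostPath, hghost], ?_⟩
    exact hw.trans (congrArg hc.vertex (by omega))

end CyclePaths

abbrev monoidOfMulIdentity {S : Type*} [Semigroup S] (e : S) (he_mul : ∀ x, e * x = x)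
    (mul_he : ∀ x, x * e = x) : Monoid S :=
  { ‹Semigroup S› with one := e, one_mul := he_mul, mul_one := mul_he }

section Corner

variable {K : Type} [Field K] {G : DGraph}

theorem mem_lpaCorner {v : G.V} {x : LPA K G} :
    x ∈ lpaCorner K G v ↔ lpaVtx K G v * x * lpaVtx K G v = x :=
  Iff.rfl

theorem lpaVtx_mem_lpaCorner (v : G.V) : lpaVtx K G v ∈ lpaCorner K G v := by
  rw [mem_lpaCorner, lpaVtx_idem, lpaVtx_idem]

theorem lpaVtx_mul_of_mem_lpaCorner {v : G.V} {x : LPA K G} (hx : x ∈ lpaCorner K G v) :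
    lpaVtx K G v * x = x := by
  rw [← mem_lpaCorner.mp hx, ← mul_assoc, ← mul_assoc, lpaVtx_idem]

theorem mul_lpaVtx_of_mem_lpaCorner {v : G.V} {x : LPA K G} (hx : x ∈ lpaCorner K G v) :
    x * lpaVtx K G v = x := by
  rw [← mem_lpaCorner.mp hx, mul_assoc, lpaVtx_idem]

variable (K G) in
noncomputable abbrev lpaCornerMonoid (v : G.V) : Monoid (lpaCorner K G v) :=
  monoidOfMulIdentity ⟨lpaVtx K G v, lpaVtx_mem_lpaCorner v⟩
    (fun x => Subtype.ext (lpaVtx_mul_of_mem_lpaCorner x.2))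
    (fun x => Subtype.ext (mul_lpaVtx_of_mem_lpaCorner x.2))

end Corner

section CycleUnit

attribute [local instance] lpaCornerMonoid

variable {K : Type} [Field K] {G : DGraph} {c : List G.E} (hc : G.IsCycle c)
  (hnoexit : G.NoExits c)

theorem cyclePath_mem_lpaCorner :
    cyclePath K hc 0 c.length ∈ lpaCorner K G (hc.vertex 0) := by
  have hend := cyclePath_mul_lpaVtx (K := K) hc 0 c.length
  rw [Nat.zero_add, hc.vertex_length] at hend
  rw [mem_lpaCorner, lpaVtx_mul_cyclePath, hend]

theorem cycleGhostPath_mem_lpaCorner :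
    cycleGhostPath K hc 0 c.length ∈ lpaCorner K G (hc.vertex 0) := by
  have hstart := lpaVtx_mul_cycleGhostPath (K := K) hc 0 c.length
  rw [Nat.zero_add, hc.vertex_length] at hstart
  rw [mem_lpaCorner, hstart, cycleGhostPath_mul_lpaVtx]

variable (K) in
noncomputable def cycleUnit : (lpaCorner K G (hc.vertex 0))ˣ where
  val := ⟨cyclePath K hc 0 c.length, cyclePath_mem_lpaCorner hc⟩
  inv := ⟨cycleGhostPath K hc 0 c.length, cycleGhostPath_mem_lpaCorner hc⟩
  val_inv := Subtype.ext (cyclePath_mul_cycleGhostPath hc hnoexit 0 c.length)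
  inv_val := Subtype.ext <| by
    show _ * _ = lpaVtx K G (hc.vertex 0)
    rw [cycleGhostPath_mul_cyclePath, Nat.zero_add, hc.vertex_length]

variable (K) in
noncomputable def cyclePow (m : ℤ) : LPA K G :=
  ((cycleUnit K hc hnoexit ^ m : (lpaCorner K G (hc.vertex 0))ˣ) : lpaCorner K G (hc.vertex 0))

theorem cyclePow_mem_lpaCorner (m : ℤ) :
    cyclePow K hc hnoexit m ∈ lpaCorner K G (hc.vertex 0) :=
  Subtype.prop _

theorem cyclePow_add (m n : ℤ) :
    cyclePow K hc hnoexit (m + n) = cyclePow K hc hnoexit m * cyclePow K hc hnoexit n := by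
  rw [cyclePow, zpow_add, Units.val_mul]
  rfl

theorem cyclePow_zero : cyclePow K hc hnoexit 0 = lpaVtx K G (hc.vertex 0) := by
  rw [cyclePow, zpow_zero]
  rfl

theorem cyclePow_one : cyclePow K hc hnoexit 1 = cyclePath K hc 0 c.length := by
  rw [cyclePow, zpow_one]
  rfl

theorem cyclePow_neg_one : cyclePow K hc hnoexit (-1) = cycleGhostPath K hc 0 c.length := by
  rw [cyclePow, zpow_neg_one]
  rfl

theorem cyclePath_eq_cyclePow_mul (q r : ℕ) :
    cyclePath K hc 0 (c.length * q + r) = cyclePow K hc hnoexit q * cyclePath K hc 0 r := by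
  induction q with
  | zero => rw [Nat.mul_zero, Nat.zero_add, Nat.cast_zero, cyclePow_zero, lpaVtx_mul_cyclePath]
  | succ q ih =>
    have hshift :
        cyclePath K hc c.length (c.length * q + r) = cyclePath K hc 0 (c.length * q + r) := by
      simpa using cyclePath_add_length (K := K) hc 0 (c.length * q + r)
    rw [Nat.mul_succ, Nat.add_right_comm, Nat.add_comm _ c.length, ← cyclePath_mul_cyclePath,
      Nat.zero_add, hshift, ih, Nat.cast_succ, Int.add_comm, cyclePow_add, cyclePow_one, mul_assoc]

theorem cycleGhostPath_eq_mul_cyclePow (q r : ℕ) :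
    cycleGhostPath K hc 0 (c.length * q + r) =
      cycleGhostPath K hc 0 r * cyclePow K hc hnoexit (-q) := by
  induction q with
  | zero =>
    rw [Nat.mul_zero, Nat.zero_add, Nat.cast_zero, neg_zero, cyclePow_zero,
      cycleGhostPath_mul_lpaVtx]
  | succ q ih =>
    have hshift : cycleGhostPath K hc c.length (c.length * q + r) =
        cycleGhostPath K hc 0 (c.length * q + r) := by
      simpa using cycleGhostPath_add_length (K := K) hc 0 (c.length * q + r)
    rw [Nat.mul_succ, Nat.add_right_comm, Nat.add_comm _ c.length,
      ← cycleGhostPath_mul_cycleGhostPath, Nat.zero_add, hshift, ih, Nat.cast_succ, neg_add,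
      cyclePow_add, cyclePow_neg_one, mul_assoc]

theorem cyclePath_mul_cycleGhostPath_eq_cyclePow (q q' r : ℕ) :
    cyclePath K hc 0 (c.length * q + r) * cycleGhostPath K hc 0 (c.length * q' + r) =
      cyclePow K hc hnoexit (q - q') := by
  rw [cyclePath_eq_cyclePow_mul hc hnoexit, cycleGhostPath_eq_mul_cyclePow hc hnoexit, mul_assoc,
    ← mul_assoc (cyclePath K hc 0 _), cyclePath_mul_cycleGhostPath hc hnoexit,
    ← cyclePow_zero hc hnoexit, ← cyclePow_add, ← cyclePow_add, zero_add, sub_eq_add_neg]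

end CycleUnit

section CornerSpan

variable {K : Type} [Field K] {G : DGraph} {c : List G.E} (hc : G.IsCycle c)
  (hnoexit : G.NoExits c)

theorem lpaCorner_le_span_cyclePow :
    (lpaCorner K G (hc.vertex 0)).toSubmodule ≤
      Submodule.span K (Set.range (cyclePow K hc hnoexit)) := by
  set v := lpaVtx K G (hc.vertex 0)
  have hcompress : Submodule.span K (insert 1 (lpaMonomials K G)) ≤
      (Submodule.span K (Set.range (cyclePow K hc hnoexit))).comap
        (LinearMap.mulLeftRight K (v, v)) := by
    rw [Submodule.span_le]
    rintro y (rfl | ⟨u, u', w, α, β, rfl⟩)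
    · refine Submodule.subset_span ⟨0, ?_⟩
      rw [LinearMap.mulLeftRight_apply, mul_one, lpaVtx_idem, cyclePow_zero]
    · rw [SetLike.mem_coe, Submodule.mem_comap, LinearMap.mulLeftRight_apply, mul_assoc,
        ← mul_assoc v, ← mul_assoc, lpaVtx_mul_lpaPath, mul_assoc, lpaGhostPath_mul_lpaVtx]
      split_ifs with hu hu'
      · obtain ⟨hα, -, hw⟩ := lpaPath_eq_cyclePath (K := K) hc hnoexit α 0 hu.symm
        obtain ⟨-, hβ, hw'⟩ := lpaPath_eq_cyclePath (K := K) hc hnoexit β 0 hu'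
        have hmod : α.length % c.length = β.length % c.length := by
          simpa using hc.mod_eq_of_vertex_eq (hw.symm.trans hw')
        rw [hα, hβ, ← Nat.div_add_mod α.length c.length, ← Nat.div_add_mod β.length c.length,
          hmod, cyclePath_mul_cycleGhostPath_eq_cyclePow hc hnoexit]
        exact Submodule.subset_span ⟨_, rfl⟩
      all_goals simp
  intro x hx
  have hx' := hcompress (span_lpaMonomials_eq_top (K := K) (G := G) ▸ Submodule.mem_top (x := x))
  rwa [Submodule.mem_comap, LinearMap.mulLeftRight_apply,
    mem_lpaCorner.mp ((NonUnitalSubalgebra.mem_toSubmodule _).mp hx)] at hx'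

end CornerSpan

namespace DGraph

@[ext]
structure InfPath (G : DGraph) where
  edge : ℕ → G.E
  isInfPath : G.IsInfPath edge

namespace InfPath

variable {G : DGraph}

def cons (e : G.E) (p : G.InfPath) (h : G.tgt e = G.src (p.edge 0)) : G.InfPath :=
  ⟨fun | 0 => e | n + 1 => p.edge n, fun
    | 0 => h
    | n + 1 => p.isInfPath n⟩

def tail (p : G.InfPath) : G.InfPath := ⟨fun n => p.edge (n + 1), fun n => p.isInfPath (n + 1)⟩

@[simp]
theorem cons_zero (e : G.E) (p : G.InfPath) (h : G.tgt e = G.src (p.edge 0)) :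
    (p.cons e h).edge 0 = e :=
  rfl

@[simp]
theorem tail_cons (e : G.E) (p : G.InfPath) (h : G.tgt e = G.src (p.edge 0)) :
    (p.cons e h).tail = p :=
  rfl

theorem cons_zero_tail (p : G.InfPath) (h : G.tgt (p.edge 0) = G.src (p.tail.edge 0)) :
    p.tail.cons (p.edge 0) h = p :=
  InfPath.ext (funext fun n => by cases n <;> rfl)

@[simp]
theorem src_tail_zero (p : G.InfPath) : G.src (p.tail.edge 0) = G.tgt (p.edge 0) :=
  (p.isInfPath 0).symm

end InfPath

namespace IsCycle

variable {G : DGraph} {c : List G.E} (hc : G.IsCycle c)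

def infPath (a : ℕ) : G.InfPath :=
  ⟨fun k => hc.edge (a + k), fun k => hc.tgt_edge (a + k)⟩

theorem infPath_zero (a : ℕ) : (hc.infPath a).edge 0 = hc.edge a := rfl

theorem infPath_tail (a : ℕ) : (hc.infPath a).tail = hc.infPath (a + 1) :=
  InfPath.ext (funext fun k => congrArg hc.edge (by omega))

theorem infPath_cons (a : ℕ) (h : G.tgt (hc.edge a) = G.src ((hc.infPath (a + 1)).edge 0)) :
    (hc.infPath (a + 1)).cons (hc.edge a) h = hc.infPath a :=
  InfPath.ext (funext fun k => by cases k <;> exact congrArg hc.edge (by omega))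

theorem infPath_add_length (a : ℕ) : hc.infPath (a + c.length) = hc.infPath a :=
  InfPath.ext (funext fun k => by
    show hc.edge (a + c.length + k) = hc.edge (a + k)
    rw [Nat.add_right_comm, hc.edge_add_length])

theorem infPath_length : hc.infPath c.length = hc.infPath 0 := by
  simpa using hc.infPath_add_length 0

end IsCycle

end DGraph

section Chen

open scoped Classical
open DGraph

variable (K : Type) [Field K] (G : DGraph)

/-- The generators act on the Chen module of infinite paths, graded by `ℤ` so that the powers of
a cycle move a basis vector to different degrees. -/
noncomputable def chenGen : LPAGen G → Module.End K (G.InfPath × ℤ →₀ K)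
  | .vertex w => Finsupp.linearCombination K fun b =>
      if G.src (b.1.edge 0) = w then Finsupp.single b 1 else 0
  | .edge e => Finsupp.linearCombination K fun b =>
      if h : G.tgt e = G.src (b.1.edge 0) then Finsupp.single (b.1.cons e h, b.2 + 1) 1 else 0
  | .ghost e => Finsupp.linearCombination K fun b =>
      if b.1.edge 0 = e then Finsupp.single (b.1.tail, b.2 - 1) 1 else 0

variable {K G}

theorem chen_ext {φ ψ : Module.End K (G.InfPath × ℤ →₀ K)}
    (h : ∀ b, φ (Finsupp.single b 1) = ψ (Finsupp.single b 1)) : φ = ψ :=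
  Finsupp.lhom_ext' fun b => LinearMap.ext_ring (h b)

theorem chenGen_respects ⦃x y : FreeAlgebra K (LPAGen G)⦄ (h : LPARel K G x y) :
    FreeAlgebra.lift K (chenGen K G) x = FreeAlgebra.lift K (chenGen K G) y := by
  induction h with
  | ck2 w hfin hne =>
    refine chen_ext fun b => ?_
    simp only [FreeAlgebra.lift_ι_apply, map_sum, map_mul, LinearMap.sum_apply,
      Module.End.mul_apply, chenGen, Finsupp.linearCombination_single, one_smul]
    rw [Finset.sum_congr rfl (g := fun e => if b.1.edge 0 = e then Finsupp.single b 1 else 0)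
      fun e _ => ?_, Finset.sum_ite_eq]
    · simp
    split_ifs with h
    · subst h
      simp [Finsupp.linearCombination_single, InfPath.cons_zero_tail]
    · simp
  | _ =>
    refine chen_ext fun b => ?_
    simp only [map_mul, map_zero, FreeAlgebra.lift_ι_apply, chenGen, Module.End.mul_apply,
      Finsupp.linearCombination_single, smul_ite, smul_dite, one_smul, smul_zero,
      apply_ite (FreeAlgebra.lift K (chenGen K G))]
    split_ifs <;> simp_all [Finsupp.linearCombination_single, eq_comm]

variable (K G) in
noncomputable def chenRep : LPA K G →ₐ[K] Module.End K (G.InfPath × ℤ →₀ K) :=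
  RingQuot.liftAlgHom K ⟨FreeAlgebra.lift K (chenGen K G), chenGen_respects⟩

theorem chenRep_mkRingHom_ι (g : LPAGen G) :
    chenRep K G (RingQuot.mkRingHom (LPARel K G) (FreeAlgebra.ι K g)) = chenGen K G g := by
  rw [← RingQuot.mkAlgHom_coe K, AlgHom.coe_toRingHom, chenRep,
    RingQuot.liftAlgHom_mkAlgHom_apply, FreeAlgebra.lift_ι_apply]

variable {c : List G.E} (hc : G.IsCycle c)

theorem chenRep_cyclePath (a j : ℕ) (d : ℤ) :
    chenRep K G (cyclePath K hc a j) (Finsupp.single (hc.infPath (a + j), d) 1) =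
      Finsupp.single (hc.infPath a, d + j) 1 := by
  induction j generalizing a d with
  | zero =>
    simp [cyclePath, lpaVtx, chenRep_mkRingHom_ι, chenGen, Finsupp.linearCombination_single,
      hc.infPath_zero, IsCycle.vertex]
  | succ j ih =>
    rw [cyclePath, map_mul, Module.End.mul_apply, show a + (j + 1) = a + 1 + j by omega, ih,
      lpaEdge, chenRep_mkRingHom_ι, chenGen, Finsupp.linearCombination_single, one_smul]
    dsimp only
    rw [dif_pos (show G.tgt (hc.edge a) = G.src ((hc.infPath (a + 1)).edge 0) from hc.tgt_edge a),
      hc.infPath_cons]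
    push_cast
    ring_nf

theorem chenRep_cycleGhostPath (a j : ℕ) (d : ℤ) :
    chenRep K G (cycleGhostPath K hc a j) (Finsupp.single (hc.infPath a, d) 1) =
      Finsupp.single (hc.infPath (a + j), d - j) 1 := by
  induction j generalizing a d with
  | zero =>
    simp [cycleGhostPath, lpaVtx, chenRep_mkRingHom_ι, chenGen, Finsupp.linearCombination_single,
      hc.infPath_zero, IsCycle.vertex]
  | succ j ih =>
    rw [cycleGhostPath, map_mul, Module.End.mul_apply, lpaGhost, chenRep_mkRingHom_ι, chenGen,
      Finsupp.linearCombination_single, one_smul, if_pos (hc.infPath_zero a), hc.infPath_tail, ih,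
      show a + 1 + j = a + (j + 1) by omega]
    push_cast
    ring_nf

variable (hnoexit : G.NoExits c)

theorem chenRep_cyclePow (m d : ℤ) :
    chenRep K G (cyclePow K hc hnoexit m) (Finsupp.single (hc.infPath 0, d) 1) =
      Finsupp.single (hc.infPath 0, d + m * c.length) 1 := by
  have hcycle (d : ℤ) : chenRep K G (cyclePow K hc hnoexit 1) (Finsupp.single (hc.infPath 0, d) 1) =
      Finsupp.single (hc.infPath 0, d + c.length) 1 := by
    have h := chenRep_cyclePath (K := K) hc 0 c.length d
    rwa [Nat.zero_add, hc.infPath_length, ← cyclePow_one hc hnoexit] at h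
  have hghost (d : ℤ) : chenRep K G (cyclePow K hc hnoexit (-1))
      (Finsupp.single (hc.infPath 0, d) 1) = Finsupp.single (hc.infPath 0, d - c.length) 1 := by
    have h := chenRep_cycleGhostPath (K := K) hc 0 c.length d
    rwa [Nat.zero_add, hc.infPath_length, ← cyclePow_neg_one hc hnoexit] at h
  induction m using Int.induction_on generalizing d with
  | zero =>
    rw [cyclePow_zero, zero_mul, add_zero]
    simpa only [cyclePath, Nat.add_zero, Nat.cast_zero, add_zero] using
      chenRep_cyclePath (K := K) hc 0 0 d
  | succ m ih =>
    rw [cyclePow_add, map_mul, Module.End.mul_apply, hcycle, ih]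
    congr 2
    ring
  | pred m ih =>
    rw [sub_eq_add_neg, cyclePow_add, map_mul, Module.End.mul_apply, hghost, ih]
    congr 2
    ring

theorem linearIndependent_cyclePow : LinearIndependent K (cyclePow K hc hnoexit) := by
  let ev : LPA K G →ₗ[K] (G.InfPath × ℤ →₀ K) :=
    LinearMap.applyₗ (Finsupp.single (hc.infPath 0, 0) 1) ∘ₗ (chenRep K G).toLinearMap
  have hev : ev ∘ cyclePow K hc hnoexit =
      fun m : ℤ => Finsupp.single (hc.infPath 0, m * c.length) (1 : K) := by
    funext m
    have h := chenRep_cyclePow (K := K) hc hnoexit m 0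
    rwa [zero_add] at h
  refine LinearIndependent.of_comp ev ?_
  rw [hev]
  refine (Finsupp.linearIndependent_single_one K _).comp _ fun m m' h => ?_
  have hlen : (c.length : ℤ) ≠ 0 := by exact_mod_cast hc.length_pos.ne'
  exact mul_right_cancel₀ hlen (congrArg Prod.snd h)

end Chen

section Laurent

variable {K : Type} [Field K] {G : DGraph} {c : List G.E} (hc : G.IsCycle c)
  (hnoexit : G.NoExits c)

theorem span_cyclePow_eq_lpaCorner :
    Submodule.span K (Set.range (cyclePow K hc hnoexit)) =
      (lpaCorner K G (hc.vertex 0)).toSubmodule :=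
  le_antisymm (Submodule.span_le.mpr (Set.range_subset_iff.mpr (cyclePow_mem_lpaCorner hc hnoexit)))
    (lpaCorner_le_span_cyclePow hc hnoexit)

variable (K) in
noncomputable def laurentToLPA : LaurentPolynomial K →ₙₐ[K] LPA K G :=
  AddMonoidAlgebra.liftMagma K
    { toFun := fun m => cyclePow K hc hnoexit m.toAdd
      map_mul' := fun m n => cyclePow_add hc hnoexit m.toAdd n.toAdd }

theorem laurentToLPA_apply (p : LaurentPolynomial K) :
    laurentToLPA K hc hnoexit p = Finsupp.linearCombination K (cyclePow K hc hnoexit) p.coeff := by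
  simp only [laurentToLPA, AddMonoidAlgebra.liftMagma_apply_apply, Finsupp.linearCombination_apply]
  rfl

theorem laurentToLPA_injective : Function.Injective (laurentToLPA K hc hnoexit) := by
  intro p q h
  rw [laurentToLPA_apply, laurentToLPA_apply] at h
  exact AddMonoidAlgebra.coeff_injective (linearIndependent_cyclePow hc hnoexit h)

theorem range_laurentToLPA :
    Set.range (laurentToLPA K hc hnoexit) = lpaCorner K G (hc.vertex 0) := by
  have hcoeff : Function.Surjective (AddMonoidAlgebra.coeff : LaurentPolynomial K → ℤ →₀ K) :=
    fun f => ⟨⟨f⟩, rfl⟩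
  rw [show ⇑(laurentToLPA K hc hnoexit) = _ ∘ AddMonoidAlgebra.coeff from
      funext (laurentToLPA_apply hc hnoexit), hcoeff.range_comp, ← LinearMap.coe_range,
    Finsupp.range_linearCombination, span_cyclePow_eq_lpaCorner,
    NonUnitalSubalgebra.coe_toSubmodule]

end Laurent

theorem stmt14_general (K : Type) [Field K] (G : DGraph) (v : G.V) (c : List G.E)
    (hc : G.IsCycle c) (hbase : c.head?.map G.src = some v)
    (hnoexit : ∀ e f : G.E, G.src e = G.src f → G.src e ∈ c.map G.src → e = f) :
    ∃ e : lpaCorner K G v ≃+* LaurentPolynomial K,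
      ∀ (k : K) (x : lpaCorner K G v), e (k • x) = k • e x := by
  obtain rfl := hc.vertex_zero hbase
  have hrange := range_laurentToLPA (K := K) hc hnoexit
  let F := NonUnitalAlgHom.codRestrict (laurentToLPA K hc hnoexit) _
    fun p => hrange ▸ Set.mem_range_self p
  have hF : Function.Bijective F :=
    ⟨fun p q h => laurentToLPA_injective hc hnoexit (congrArg Subtype.val h), fun x => by
      obtain ⟨p, hp⟩ : (x : LPA K G) ∈ Set.range (laurentToLPA K hc hnoexit) := by
        rw [hrange]
        exact x.2
      exact ⟨p, Subtype.ext hp⟩⟩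
  refine ⟨(RingEquiv.ofBijective F hF).symm, fun k x => (RingEquiv.ofBijective F hF).injective ?_⟩
  rw [RingEquiv.apply_symm_apply, RingEquiv.ofBijective_apply, map_smul,
    ← RingEquiv.ofBijective_apply F hF, RingEquiv.apply_symm_apply]

set_option synthInstance.maxHeartbeats 1000000 in
/-- If `T_E(v)` is a single cycle `c` based at `v` without exits, then the
corner `v L_K(E) v` is isomorphic, as a `K`-algebra, to the Laurent polynomial ring
`K[x, x⁻¹]`. -/
theorem stmt14 (K : Type) [Field K] (G : DGraph) (v : G.V) (c : List G.E)
    (hc : G.IsCycle c) (hbase : c.head?.map G.src = some v)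
    (htree : {w : G.V | G.Reaches v w} = {w : G.V | w ∈ c.map G.src})
    (hnoexit : ∀ e f : G.E, G.src e = G.src f → G.src e ∈ c.map G.src → e = f) :
    ∃ e : lpaCorner K G v ≃+* LaurentPolynomial K,
      ∀ (k : K) (x : lpaCorner K G v), e (k • x) = k • e x :=
  stmt14_general K G v c hc hbase hnoexit
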